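/- Let (g,J) be a Lie algebra with integrable complex structure, (E,I) a real vector space with complex structure and ρ : g → End(E) a representation. Form the semidirect product Lie algebra E ⋊ g with bracket [(v,x),(w,y)] = (ρ(x)w − ρ(y)v, [x,y]) and almost complex structure K = I × J. Then K is integrable (the Nijenhuis tensor of K vanishes on E ⋊ g) if and only if ρ is an integrable representation, i.e. [I, ρ(Jx)] + I[ρ(x),I] = 0 for all x ∈ g. -/

import Mathlib

attribute [local instance 100] LieRing.ofAssociativeRing

/-- The bracket of the semidirect product Lie algebra `E ⋊ g` attached to a
representation `ρ : g → End(E)` (with `E` abelian):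
`[(v,x),(w,y)] = (ρ(x)w − ρ(y)v, [x,y])`. -/
def sdBracket {g E : Type} [LieRing g] [LieAlgebra ℝ g]
    [AddCommGroup E] [Module ℝ E] (ρ : g →ₗ⁅ℝ⁆ Module.End ℝ E) :
    E × g → E × g → E × g :=
  fun a b => (ρ a.2 b.1 - ρ b.2 a.1, ⁅a.2, b.2⁆)

/-- Nijenhuis tensor of an endomorphism `K` with respect to a bracket `br`:
`N_K(a,b) = br a b − br (Ka) (Kb) + K (br (Ka) b) + K (br a (Kb))`. -/
def nijOf {X : Type} [AddCommGroup X] (br : X → X → X) (K : X → X) :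
    X → X → X :=
  fun a b => br a b - br (K a) (K b) + K (br (K a) b) + K (br a (K b))

/-!
Since `E` is an abelian ideal, the Nijenhuis tensor of `K = I × J` on `E ⋊ g` splits into
components: its `g`-component is the Nijenhuis tensor of `J`, and, when `I² = -1`, its
`E`-component at `((v,x),(w,y))` is `N(x) w - N(y) v` with `N(x) = [I, ρ(Jx)] + I[ρ(x), I]`.
Evaluating at `((0,x),(w,0))` isolates `N(x) w`.
-/

lemma lie_add_mul_lie_apply {R E : Type*} [CommRing R] [AddCommGroup E] [Module R E]
    (I A B : Module.End R E) (hI : ∀ v : E, I (I v) = -v) (w : E) :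
    (⁅I, B⁆ + I * ⁅A, I⁆) w = A w - B (I w) + I (B w) + I (A (I w)) := by
  simp only [Ring.lie_def, LinearMap.add_apply, LinearMap.sub_apply, Module.End.mul_apply,
    map_sub, hI]
  abel

section Semidirect

variable {g E : Type} [LieRing g] [LieAlgebra ℝ g] [AddCommGroup E] [Module ℝ E]
  (ρ : g →ₗ⁅ℝ⁆ Module.End ℝ E) (I : Module.End ℝ E) (J : g → g)

lemma nijOf_sdBracket_fst (hI : ∀ v : E, I (I v) = -v) (v w : E) (x y : g) :
    (nijOf (sdBracket ρ) (fun c => (I c.1, J c.2)) (v, x) (w, y)).1 =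
      (⁅I, ρ (J x)⁆ + I * ⁅ρ x, I⁆) w - (⁅I, ρ (J y)⁆ + I * ⁅ρ y, I⁆) v := by
  simp only [lie_add_mul_lie_apply I _ _ hI, nijOf, sdBracket, Prod.fst_add, Prod.fst_sub,
    map_sub]
  abel

lemma nijOf_sdBracket_snd (v w : E) (x y : g) :
    (nijOf (sdBracket ρ) (fun c => (I c.1, J c.2)) (v, x) (w, y)).2 =
      nijOf (fun a b : g => ⁅a, b⁆) J x y :=
  rfl

end Semidirect

theorem semidirect_K_integrable_iff_rep_integrable_general
    (g E : Type) [LieRing g] [LieAlgebra ℝ g]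
    [AddCommGroup E] [Module ℝ E]
    (J : g →ₗ[ℝ] g)
    (hNij : ∀ x y : g, ⁅x, y⁆ - ⁅J x, J y⁆ + J ⁅J x, y⁆ + J ⁅x, J y⁆ = 0)
    (I : Module.End ℝ E) (hI : ∀ v : E, I (I v) = -v)
    (ρ : g →ₗ⁅ℝ⁆ Module.End ℝ E) :
    (∀ a b : E × g, nijOf (sdBracket ρ) (fun c => (I c.1, J c.2)) a b = 0) ↔
    (∀ x : g, ⁅I, ρ (J x)⁆ + I * ⁅ρ x, I⁆ = 0) := by
  constructor
  · intro hK x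
    ext w
    have hE := congrArg Prod.fst (hK (0, x) (w, 0))
    rw [nijOf_sdBracket_fst ρ I J hI] at hE
    simpa using hE
  · rintro hρ ⟨v, x⟩ ⟨w, y⟩
    ext
    · rw [nijOf_sdBracket_fst ρ I J hI, hρ x, hρ y]
      simp
    · exact (nijOf_sdBracket_snd ρ I J v w x y).trans (hNij x y)

/-- Let `(g,J)` be a Lie algebra with integrable complex structure,
`(E,I)` a vector space with complex structure and `ρ : g → End(E)` a
representation.  Then the almost complex structure `K = I × J` on the
semidirect product `E ⋊ g` is integrable (its Nijenhuis tensor vanishes) if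
and only if `ρ` is integrable, i.e. `[I, ρ(Jx)] + I∘[ρ(x), I] = 0` for all
`x ∈ g`. -/
theorem semidirect_K_integrable_iff_rep_integrable
    (g E : Type) [LieRing g] [LieAlgebra ℝ g]
    [AddCommGroup E] [Module ℝ E]
    (J : g →ₗ[ℝ] g) (hJ : ∀ x : g, J (J x) = -x)
    (hNij : ∀ x y : g, ⁅x, y⁆ - ⁅J x, J y⁆ + J ⁅J x, y⁆ + J ⁅x, J y⁆ = 0)
    (I : Module.End ℝ E) (hI : ∀ v : E, I (I v) = -v)
    (ρ : g →ₗ⁅ℝ⁆ Module.End ℝ E) :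
    (∀ a b : E × g, nijOf (sdBracket ρ) (fun c => (I c.1, J c.2)) a b = 0) ↔
    (∀ x : g, ⁅I, ρ (J x)⁆ + I * ⁅ρ x, I⁆ = 0) :=
  semidirect_K_integrable_iff_rep_integrable_general g E J hNij I hI ρ
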